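/- Let Σ̂ be a symmetric positive definite d×d matrix and S a symmetric positive semidefinite d×d matrix. Define G = Σ̂^{-1/2} (Σ̂^{1/2} S² Σ̂^{1/2})^{1/2} Σ̂^{-1/2}. Then G is symmetric positive semidefinite and G Σ̂ Gᵀ = S². -/

import Mathlib

open ProbabilityTheory MeasureTheory Matrix

/-- The standard logistic (sigmoid) function. -/
noncomputable def sigmoid (t : ℝ) : ℝ := 1 / (1 + Real.exp (-t))

/-- CDF of the standard one-dimensional Gaussian. -/
noncomputable def stdNormalCDF (x : ℝ) : ℝ := (gaussianReal 0 1 (Set.Iic x)).toReal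

/-- Quantile function of the standard one-dimensional Gaussian. -/
noncomputable def stdNormalQuantile (p : ℝ) : ℝ := sInf {x : ℝ | p ≤ stdNormalCDF x}

/-- `P` is the multivariate Gaussian `N(m, C)`: every one-dimensional linear marginal
`θᵀX` is the real Gaussian with mean `θᵀm` and variance `θᵀCθ`. -/
def IsMultiGaussian {d : ℕ} (P : Measure (Fin d → ℝ)) (m : Fin d → ℝ)
    (C : Matrix (Fin d) (Fin d) ℝ) : Prop :=
  ∀ θ : Fin d → ℝ,
    P.map (fun x => θ ⬝ᵥ x) = gaussianReal (θ ⬝ᵥ m) (Real.toNNReal (θ ⬝ᵥ C.mulVec θ))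

/-- Euclidean (ℓ²) norm of a vector in ℝ^d. -/
noncomputable def euclNorm {d : ℕ} (v : Fin d → ℝ) : ℝ := Real.sqrt (v ⬝ᵥ v)

/-- Frobenius norm of a d×d real matrix. -/
noncomputable def frobNorm {d : ℕ} (A : Matrix (Fin d) (Fin d) ℝ) : ℝ :=
  Real.sqrt (∑ i, ∑ j, (A i j) ^ 2)

namespace Matrix.PosSemidef

open scoped ComplexOrder

variable {n 𝕜 : Type*} [Fintype n] [RCLike 𝕜] [DecidableEq n] {A : Matrix n n 𝕜}

/-- The positive semidefinite square root of a positive semidefinite matrix -/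
noncomputable def sqrt (hA : PosSemidef A) : Matrix n n 𝕜 :=
  hA.1.eigenvectorUnitary.1 * diagonal ((↑) ∘ (√·) ∘ hA.1.eigenvalues) *
  (star hA.1.eigenvectorUnitary : Matrix n n 𝕜)

lemma posSemidef_sqrt (hA : PosSemidef A) : PosSemidef hA.sqrt := by
  apply PosSemidef.mul_mul_conjTranspose_same
  refine posSemidef_diagonal_iff.mpr fun i ↦ ?_
  rw [Function.comp_apply, RCLike.nonneg_iff]
  constructor
  · simp only [RCLike.ofReal_re]; exact Real.sqrt_nonneg _
  · simp only [RCLike.ofReal_im]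

end Matrix.PosSemidef

lemma aux_psd {d : ℕ} {A M : Matrix (Fin d) (Fin d) ℝ} (hA : A.IsHermitian)
    (hM : M.PosSemidef) : (A * M * A).PosSemidef := by
  have h := hM.mul_mul_conjTranspose_same A
  rwa [hA.eq] at h

/-!
With `R = Σ̂^{1/2}` and `T = (R S² R)^{1/2}` we have `G = R⁻¹ T R⁻¹`, a congruence of the positive
semidefinite `T` by the symmetric `R⁻¹`, hence positive semidefinite and symmetric. Then
`G Σ̂ Gᵀ = R⁻¹ T (R⁻¹ R)(R R⁻¹) T R⁻¹ = R⁻¹ T² R⁻¹ = R⁻¹ (R S² R) R⁻¹ = S²`.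
-/

namespace Matrix

variable {n : Type*} [Fintype n] [DecidableEq n]

theorem riccati_of_mul_self_eq {α : Type*} [CommRing α] {R T M : Matrix n n α}
    (hR : IsUnit R.det) (hT : T * T = R * M * R) :
    R⁻¹ * T * R⁻¹ * (R * R) * (R⁻¹ * T * R⁻¹) = M :=
  calc R⁻¹ * T * R⁻¹ * (R * R) * (R⁻¹ * T * R⁻¹)
      = R⁻¹ * (T * (R⁻¹ * R) * (R * R⁻¹) * T) * R⁻¹ := by simp only [mul_assoc]
    _ = R⁻¹ * (R * M * R) * R⁻¹ := by
      rw [nonsing_inv_mul _ hR, mul_nonsing_inv _ hR, mul_one, mul_one, hT]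
    _ = M := by
      rw [← mul_assoc, ← mul_assoc, nonsing_inv_mul _ hR, one_mul, mul_assoc,
        mul_nonsing_inv _ hR, mul_one]

open scoped ComplexOrder

variable {𝕜 : Type*} [RCLike 𝕜] {A : Matrix n n 𝕜}

theorem PosSemidef.sqrt_mul_self (hA : PosSemidef A) : hA.sqrt * hA.sqrt = A := by
  set U : Matrix n n 𝕜 := hA.1.eigenvectorUnitary.1
  set D : Matrix n n 𝕜 := diagonal ((↑) ∘ (√·) ∘ hA.1.eigenvalues)
  have hD : D * D = diagonal (RCLike.ofReal ∘ hA.1.eigenvalues) := by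
    rw [diagonal_mul_diagonal]
    congr 1
    funext i
    simp only [Function.comp_apply, ← RCLike.ofReal_mul,
      Real.mul_self_sqrt (hA.eigenvalues_nonneg i)]
  have hU : star U * U = 1 := Unitary.coe_star_mul_self _
  calc hA.sqrt * hA.sqrt = U * D * (star U * U) * D * star U := by
        simp only [sqrt, U, D, mul_assoc]
    _ = A := by
      rw [hU, mul_one, mul_assoc U, hD]
      exact (Unitary.conjStarAlgAut_apply _ _).symm.trans hA.1.spectral_theorem.symm

theorem PosDef.isUnit_det_sqrt (hA : PosDef A) : IsUnit hA.posSemidef.sqrt.det := by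
  have h : hA.posSemidef.sqrt.det * hA.posSemidef.sqrt.det = A.det := by
    rw [← det_mul, hA.posSemidef.sqrt_mul_self]
  exact isUnit_of_mul_isUnit_left (h ▸ hA.det_pos.ne'.isUnit)

end Matrix

theorem stmt3 {d : ℕ} {Sig S : Matrix (Fin d) (Fin d) ℝ}
    (hSig : Sig.PosDef) (hS : S.PosSemidef) :
    ∀ G : Matrix (Fin d) (Fin d) ℝ,
      G = hSig.posSemidef.sqrt⁻¹ *
            (aux_psd hSig.posSemidef.posSemidef_sqrt.1 (hS.pow 2)).sqrt *
            hSig.posSemidef.sqrt⁻¹ →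
      G.PosSemidef ∧ G * Sig * Gᵀ = S ^ 2 := by
  intro G hG
  have hG_psd : G.PosSemidef :=
    hG ▸ aux_psd hSig.posSemidef.posSemidef_sqrt.1.inv (PosSemidef.posSemidef_sqrt _)
  refine ⟨hG_psd, ?_⟩
  rw [← conjTranspose_eq_transpose_of_trivial, hG_psd.1.eq, ← hSig.posSemidef.sqrt_mul_self, hG]
  exact riccati_of_mul_self_eq hSig.isUnit_det_sqrt (PosSemidef.sqrt_mul_self _)
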